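/- In a disjunctive counter system, the O-predecessor operator is sound and sandwiched between pred and pred*: for every set R of configurations, pred(R) ⊆ opred(R) ⊆ pred*(R), where opred(R) consists of pred(R) together with all configurations (q_A, c) from which some (q'_A, c') ∈ R is reachable by executing a single local B-transition t = (q_i, g, q_j) one or more times, provided c(j) = 0 or c'(i) = 0. -/
import Mathlib


def guardSat {QA QB : Type*} (qA : QA) (c : QB → ℕ) (q : QA ⊕ QB)
    (g : Set (QA ⊕ QB)) : Prop :=
  (q = Sum.inl qA ∧ ∃ qi : QB, Sum.inr qi ∈ g ∧ 1 ≤ c qi) ∨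
  (∃ qb : QB, q = Sum.inr qb ∧ 1 ≤ c qb ∧ Sum.inl qA ∈ g) ∨
  (∃ qb qi : QB, q = Sum.inr qb ∧ 1 ≤ c qb ∧ Sum.inr qi ∈ g ∧ qi ≠ qb ∧ 1 ≤ c qi) ∨
  (∃ qb : QB, q = Sum.inr qb ∧ Sum.inr qb ∈ g ∧ 2 ≤ c qb)

def moveB {QB : Type*} [DecidableEq QB] (qi qj : QB) (c : QB → ℕ) : QB → ℕ :=
  fun q => c q - (if q = qi then 1 else 0) + (if q = qj then 1 else 0)

def Step {QA QB : Type*} [DecidableEq QB]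
    (δA : Set (QA × Set (QA ⊕ QB) × QA)) (δB : Set (QB × Set (QA ⊕ QB) × QB))
    (s s' : QA × (QB → ℕ)) : Prop :=
  (∃ t ∈ δA, t.1 = s.1 ∧ guardSat s.1 s.2 (Sum.inl t.1) t.2.1 ∧ s' = (t.2.2, s.2)) ∨
  (∃ t ∈ δB, 1 ≤ s.2 t.1 ∧ guardSat s.1 s.2 (Sum.inr t.1) t.2.1 ∧
    s' = (s.1, moveB t.1 t.2.2 s.2))

def StepB {QA QB : Type*} [DecidableEq QB]
    (δB : Set (QB × Set (QA ⊕ QB) × QB)) (t : QB × Set (QA ⊕ QB) × QB)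
    (s s' : QA × (QB → ℕ)) : Prop :=
  t ∈ δB ∧ 1 ≤ s.2 t.1 ∧ guardSat s.1 s.2 (Sum.inr t.1) t.2.1 ∧
    s' = (s.1, moveB t.1 t.2.2 s.2)

def iterRel {α : Type*} (r : α → α → Prop) : ℕ → α → α → Prop
  | 0 => Eq
  | n + 1 => fun a c => ∃ b, r a b ∧ iterRel r n b c

def pred {S : Type*} (Δ : S → S → Prop) (R : Set S) : Set S :=
  {s | ∃ r ∈ R, Δ s r}

def predStar {S : Type*} (Δ : S → S → Prop) (R : Set S) : Set S :=
  {s | ∃ r ∈ R, Relation.ReflTransGen Δ s r}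

/-- The O-predecessor operator: immediate predecessors together with states
reaching `R` by one or more applications of a single `B`-transition
`t = (qᵢ, g, qⱼ)`, provided `c(j) = 0` at the start or `c'(i) = 0` at the
end. -/
def opred {QA QB : Type*} [DecidableEq QB]
    (δA : Set (QA × Set (QA ⊕ QB) × QA)) (δB : Set (QB × Set (QA ⊕ QB) × QB))
    (R : Set (QA × (QB → ℕ))) : Set (QA × (QB → ℕ)) :=
  pred (Step δA δB) R ∪
    {s | ∃ r ∈ R, ∃ t ∈ δB, ∃ k, 1 ≤ k ∧ iterRel (StepB δB t) k s r ∧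
      (s.2 t.2.2 = 0 ∨ r.2 t.1 = 0)}

lemma stepB_step {QA QB : Type*} [DecidableEq QB]
    (δA : Set (QA × Set (QA ⊕ QB) × QA)) (δB : Set (QB × Set (QA ⊕ QB) × QB))
    (t : QB × Set (QA ⊕ QB) × QB) {s s' : QA × (QB → ℕ)}
    (h : StepB δB t s s') : Step δA δB s s' :=
  Or.inr ⟨t, h.1, h.2⟩

lemma iterRel_rtg {QA QB : Type*} [DecidableEq QB]
    (δA : Set (QA × Set (QA ⊕ QB) × QA)) (δB : Set (QB × Set (QA ⊕ QB) × QB))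
    (t : QB × Set (QA ⊕ QB) × QB) :
    ∀ k {s r : QA × (QB → ℕ)}, iterRel (StepB δB t) k s r →
      Relation.ReflTransGen (Step δA δB) s r
  | 0, s, r, h => by cases h; exact .refl
  | k + 1, s, r, ⟨b, hb, hrest⟩ =>
    Relation.ReflTransGen.head (stepB_step δA δB t hb) (iterRel_rtg δA δB t k hrest)

/-- `opred` is sandwiched between `pred` and `pred*`. -/
theorem opred_sandwiched {QA QB : Type*} [DecidableEq QB]
    (δA : Set (QA × Set (QA ⊕ QB) × QA)) (δB : Set (QB × Set (QA ⊕ QB) × QB))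
    (R : Set (QA × (QB → ℕ))) :
    pred (Step δA δB) R ⊆ opred δA δB R ∧
    opred δA δB R ⊆ predStar (Step δA δB) R := by
  constructor
  · exact Set.subset_union_left
  · rintro s (⟨r, hr, hs⟩ | ⟨r, hr, t, ht, k, _, hit, _⟩)
    · exact ⟨r, hr, Relation.ReflTransGen.single hs⟩
    · exact ⟨r, hr, iterRel_rtg δA δB t k hit⟩
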